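/- arXiv:2008.09969 — 2 statements merged into one kernel-verified Lean document; each statement's English description precedes it below -/
import Mathlib

section
/- Fix a real number ε with 0 < ε < 1, and let p₁, …, p_k be finitely many polynomials with real coefficients such that each constant term p_i(0) is a natural number. Then there exist infinitely many N ∈ ℕ (i.e., for every M ∈ ℕ there exists N ≥ M) such that ‖p_i(N)‖ < ε for every i = 1, …, k. -/
/-- For `α : ℝ`, the distance from `α` to the nearest integer. -/
noncomputable def distToNearestInt (α : ℝ) : ℝ := |α - (round α : ℤ)|

namespace SIPAux

open Polynomial

lemma dtni_nonneg (x : ℝ) : 0 ≤ distToNearestInt x := abs_nonneg _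

lemma dtni_le (x : ℝ) (z : ℤ) : distToNearestInt x ≤ |x - (z : ℝ)| := round_le x z

lemma dtni_int (z : ℤ) : distToNearestInt (z : ℝ) = 0 := by
  simp [distToNearestInt, round_intCast]

lemma dtni_add (x y : ℝ) : distToNearestInt (x + y) ≤ distToNearestInt x + distToNearestInt y := by
  calc distToNearestInt (x + y) ≤ |x + y - ((round x + round y : ℤ) : ℝ)| := dtni_le _ _
    _ = |(x - (round x : ℤ)) + (y - (round y : ℤ))| := by push_cast; ring_nf
    _ ≤ _ := abs_add_le _ _

lemma abs_sub_lt_one_of_floor_eq {x y : ℝ} (h : ⌊x⌋ = ⌊y⌋) : |x - y| < 1 := by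
  have h1 := Int.floor_le x
  have h2 := Int.lt_floor_add_one x
  have h3 := Int.floor_le y
  have h4 := Int.lt_floor_add_one y
  rw [abs_sub_lt_iff]
  constructor <;> [skip; skip] <;> rw [h] at * <;> linarith

lemma dtni_sub_le_fract (x y : ℝ) :
    distToNearestInt (x - y) ≤ |Int.fract x - Int.fract y| := by
  have : x - y - ((⌊x⌋ - ⌊y⌋ : ℤ) : ℝ) = Int.fract x - Int.fract y := by
    unfold Int.fract; push_cast; ring
  calc distToNearestInt (x - y) ≤ |x - y - ((⌊x⌋ - ⌊y⌋ : ℤ) : ℝ)| := dtni_le _ _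
    _ = _ := by rw [this]

lemma hasseDeriv_eq_C {p : ℝ[X]} {d j : ℕ} (hp : ∀ m, d + 1 < m → p.coeff m = 0)
    (hj : d < j) : hasseDeriv j p = C (p.coeff j) := by
  ext n
  rw [hasseDeriv_coeff]
  cases n with
  | zero => simp
  | succ n =>
      rw [hp (n + 1 + j) (by omega), coeff_C]
      simp

lemma coeff_taylor_sub {p : ℝ[X]} {d : ℕ} (hp : ∀ m, d + 1 < m → p.coeff m = 0)
    (u : ℝ) {j : ℕ} (hj : d < j) : ((taylor u p) - p).coeff j = p.coeff j - p.coeff j := by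
  rw [coeff_sub, taylor_coeff, hasseDeriv_eq_C hp hj, eval_C]

/-- The main induction: if all polynomials have coefficients vanishing above degree `d`
and integer constant term, then `‖pᵢ(n)‖ < ε` has solutions `n ≥ M` for every `M`. -/
theorem main (d : ℕ) : ∀ (ι : Type) [Fintype ι] (p : ι → Polynomial ℝ),
    (∀ i j, d < j → (p i).coeff j = 0) →
    (∀ i, ∃ z : ℤ, (p i).coeff 0 = (z : ℝ)) →
    ∀ ε : ℝ, 0 < ε → ∀ M : ℕ, ∃ n : ℕ, M ≤ n ∧
      ∀ i, distToNearestInt ((p i).eval (n : ℝ)) < ε := by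
  induction d with
  | zero =>
      intro ι _ p hdeg hconst ε hε M
      refine ⟨M, le_refl _, fun i => ?_⟩
      obtain ⟨z, hz⟩ := hconst i
      have hpC : p i = C ((p i).coeff 0) := by
        ext j
        cases j with
        | zero => simp
        | succ j => rw [hdeg i (j+1) (Nat.succ_pos _), coeff_C]; simp
      rw [hpC, eval_C, hz, dtni_int]
      exact hε
  | succ d IH =>
      intro ι _ p hdeg hconst ε hε M
      classical
      set c : ι → ℝ := fun i => (p i).coeff 0 with hc
      -- difference polynomials
      set h : ι → ℕ → Polynomial ℝ :=
        fun i u => taylor (u : ℝ) (p i) - p i - C ((p i).eval (u : ℝ)) + C (c i) with hh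
      have hdeg' : ∀ i (u : ℕ) j, d < j → (h i u).coeff j = 0 := by
        intro i u j hj
        have h1 : ((taylor (u:ℝ) (p i)) - p i).coeff j = 0 := by
          rw [coeff_taylor_sub (fun m hm => hdeg i m hm) _ hj]; ring
        rw [coeff_sub] at h1
        have hj1 : j ≠ 0 := by omega
        simp only [hh, coeff_add, coeff_sub, coeff_C, if_neg hj1]
        linarith
      have hconst' : ∀ i (u : ℕ), (h i u).coeff 0 = 0 := by
        intro i u
        simp only [hh, coeff_add, coeff_sub, coeff_C, taylor_coeff_zero, hc]
        norm_num
      have heval : ∀ i (u m : ℕ),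
          (h i u).eval (m : ℝ) =
            (p i).eval ((u + m : ℕ) : ℝ) - (p i).eval (m : ℝ) - (p i).eval (u : ℝ) + c i := by
        intro i u m
        simp [hh, eval_sub, eval_add, eval_C, taylor_eval]
        push_cast
        ring_nf
      -- constants
      set B : ℕ := ⌈(2:ℝ)/ε⌉₊ with hB
      have hB0 : 0 < B := Nat.ceil_pos.mpr (by positivity)
      have hBε : (1 : ℝ) / B ≤ ε / 2 := by
        have h2 : (2:ℝ)/ε ≤ B := Nat.le_ceil _
        rw [div_le_div_iff₀ (by exact_mod_cast hB0) (by norm_num)]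
        rw [div_le_iff₀ hε] at h2
        linarith
      set R : ℕ := B ^ (Fintype.card ι) with hR
      set δ : ℝ := ε / (2 * (R + 1)) with hδ
      have hδ0 : 0 < δ := by positivity
      -- the step-choice
      have key : ∀ U : ℕ, ∃ n : ℕ, max M 1 ≤ n ∧
          ∀ i, ∀ u ≤ U, distToNearestInt ((h i u).eval (n : ℝ)) < δ := by
        intro U
        obtain ⟨n, hn, hprop⟩ := IH (ι × Fin (U+1)) (fun x => h x.1 x.2)
          (fun x j hj => hdeg' x.1 x.2 j hj)
          (fun x => ⟨0, by rw [hconst' x.1 x.2]; norm_num⟩) δ hδ0 (max M 1)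
        exact ⟨n, hn, fun i u hu => hprop ⟨i, ⟨u, by omega⟩⟩⟩
      set F : ℕ → ℕ := fun U => (key U).choose with hF
      have hF1 : ∀ U, max M 1 ≤ F U := fun U => (key U).choose_spec.1
      have hF2 : ∀ U i, ∀ u ≤ U, distToNearestInt ((h i u).eval (F U : ℝ)) < δ :=
        fun U => (key U).choose_spec.2
      set S : ℕ → ℕ := fun t => Nat.rec 0 (fun _ s => s + F s) t with hS
      have hSsucc : ∀ t, S (t+1) = S t + F (S t) := fun t => rfl
      have hSmono : Monotone S := monotone_nat_of_le_succ (by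
        intro t; rw [hSsucc]; exact Nat.le_add_right _ _)
      set G : ι → ℕ → ℝ :=
        fun i b => ∑ t ∈ Finset.range b, ((p i).eval ((F (S t) : ℕ) : ℝ) - c i) with hG
      -- key estimate
      have est : ∀ (a b : ℕ), a ≤ b → ∀ i,
          distToNearestInt ((p i).eval (((S b - S a : ℕ)) : ℝ) - (G i b - G i a) - c i)
            ≤ (b - a : ℕ) * δ := by
        intro a b hab
        induction b, hab using Nat.le_induction with
        | base =>
            intro i
            have h1 : (S a - S a : ℕ) = (0:ℕ) := by omega
            have h2 : (a - a : ℕ) = 0 := by omega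
            rw [h1, h2]
            have h0 : (p i).eval (((0:ℕ)):ℝ) = c i := by
              show (p i).eval ((0:ℕ):ℝ) = (p i).coeff 0
              rw [coeff_zero_eq_eval_zero]; norm_num
            rw [h0]
            have h3 : c i - (G i a - G i a) - c i = ((0:ℤ):ℝ) := by push_cast; ring
            rw [h3, dtni_int]
            norm_num
        | succ b hab ih =>
            intro i
            have hSab : S a ≤ S b := hSmono hab
            have hsplit : (S (b+1) - S a : ℕ) = (S b - S a) + F (S b) := by
              rw [hSsucc]; omega
            have hGsucc : G i (b+1) = G i b + ((p i).eval ((F (S b) : ℕ) : ℝ) - c i) := by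
              rw [hG]; exact Finset.sum_range_succ _ _
            set u : ℕ := S b - S a with hu
            set m : ℕ := F (S b) with hm
            have hX : (p i).eval (((S (b+1) - S a : ℕ)) : ℝ) - (G i (b+1) - G i a) - c i
                = ((p i).eval ((u : ℕ) : ℝ) - (G i b - G i a) - c i)
                  + (h i u).eval (m : ℝ) := by
              rw [hsplit, hGsucc, heval]
              ring
            rw [hX]
            have hstep : distToNearestInt ((h i u).eval (m : ℝ)) < δ :=
              hF2 (S b) i u (by omega)
            have hcast : ((b + 1 - a : ℕ) : ℝ) = ((b - a : ℕ) : ℝ) + 1 := by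
              have h4 : (b + 1 - a : ℕ) = (b - a) + 1 := by omega
              rw [h4]; push_cast; ring
            calc distToNearestInt (((p i).eval ((u : ℕ) : ℝ) - (G i b - G i a) - c i)
                  + (h i u).eval (m : ℝ))
                ≤ distToNearestInt ((p i).eval ((u : ℕ) : ℝ) - (G i b - G i a) - c i)
                  + distToNearestInt ((h i u).eval (m : ℝ)) := dtni_add _ _
              _ ≤ (b - a : ℕ) * δ + δ := by
                  have := ih i
                  linarith
              _ = ((b + 1 - a : ℕ) : ℝ) * δ := by rw [hcast]; ring
      -- pigeonhole
      have hcard : Fintype.card (ι → Fin B) < Fintype.card (Fin (R+1)) := by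
        rw [Fintype.card_fun, Fintype.card_fin, Fintype.card_fin, hR]
        exact Nat.lt_succ_self _
      set box : ℝ → Fin B := fun x => ⟨(⌊Int.fract x * B⌋).toNat, by
        have h1 : Int.fract x * B < B := by
          have := Int.fract_lt_one x
          have hBpos : (0:ℝ) < B := by exact_mod_cast hB0
          calc Int.fract x * B < 1 * B := by
                apply mul_lt_mul_of_pos_right this hBpos
            _ = B := one_mul _
        have h2 : (⌊Int.fract x * B⌋ : ℝ) < B := lt_of_le_of_lt (Int.floor_le _) h1
        have h3 : ⌊Int.fract x * B⌋ < (B:ℤ) := by exact_mod_cast h2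
        omega⟩ with hbox
      have boxf : ∀ x y : ℝ, box x = box y → |Int.fract x - Int.fract y| < 1 / B := by
        intro x y hxy
        have h0x : (0:ℤ) ≤ ⌊Int.fract x * B⌋ :=
          Int.floor_nonneg.mpr (mul_nonneg (Int.fract_nonneg _) (Nat.cast_nonneg _))
        have h0y : (0:ℤ) ≤ ⌊Int.fract y * B⌋ :=
          Int.floor_nonneg.mpr (mul_nonneg (Int.fract_nonneg _) (Nat.cast_nonneg _))
        have hfl : ⌊Int.fract x * B⌋ = ⌊Int.fract y * B⌋ := by
          have hvv := congrArg Fin.val hxy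
          simp only [hbox, Fin.val_mk] at hvv
          omega
        have habs := abs_sub_lt_one_of_floor_eq hfl
        have hBpos : (0:ℝ) < B := by exact_mod_cast hB0
        have key2 : |Int.fract x - Int.fract y| * B < 1 := by
          calc |Int.fract x - Int.fract y| * B = |Int.fract x * B - Int.fract y * B| := by
                rw [← sub_mul, abs_mul, abs_of_pos hBpos]
            _ < 1 := habs
        rw [lt_div_iff₀ hBpos]
        exact key2
      obtain ⟨av, bv, hne, heq⟩ := Fintype.exists_ne_map_eq_of_card_lt
        (fun (b : Fin (R+1)) (i : ι) => box (G i b)) hcard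
      -- wlog av < bv
      obtain ⟨a, b, hab, habeq⟩ : ∃ a b : Fin (R+1), a < b ∧
          (fun (i:ι) => box (G i a)) = (fun (i:ι) => box (G i b)) := by
        rcases lt_or_gt_of_ne hne with hlt | hgt
        · exact ⟨av, bv, hlt, heq⟩
        · exact ⟨bv, av, hgt, heq.symm⟩
      set N : ℕ := S b - S a with hN
      refine ⟨N, ?_, ?_⟩
      · -- N ≥ M
        have h1 : S a + F (S a) = S (a + 1 : ℕ) := (hSsucc a).symm
        have h2 : S ((a:ℕ) + 1) ≤ S b := hSmono (by exact_mod_cast hab)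
        have h3 := hF1 (S a)
        omega
      · intro i
        have hGdiff : distToNearestInt (G i b - G i a) < ε / 2 := by
          have hbb : box (G i a) = box (G i b) := congrFun habeq i
          have := boxf _ _ hbb
          calc distToNearestInt (G i b - G i a)
              ≤ |Int.fract (G i b) - Int.fract (G i a)| := dtni_sub_le_fract _ _
            _ = |Int.fract (G i a) - Int.fract (G i b)| := abs_sub_comm _ _
            _ < 1 / B := this
            _ ≤ ε / 2 := hBε
        have hEst := est a b (le_of_lt (by exact_mod_cast hab)) i
        have hEst2 : ((b - a : ℕ) : ℝ) * δ < ε / 2 := by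
          have hba : ((b:ℕ) - (a:ℕ) : ℕ) ≤ R := by
            have := b.isLt
            omega
          have : ((b - a : ℕ) : ℝ) * δ ≤ (R : ℝ) * δ := by
            apply mul_le_mul_of_nonneg_right _ (le_of_lt hδ0)
            exact_mod_cast hba
          have hδval : δ * (2 * ((R:ℝ) + 1)) = ε := by
            rw [hδ]; field_simp
          have hRδ : (R : ℝ) * δ < ε / 2 := by nlinarith [hδ0, (Nat.cast_nonneg R : (0:ℝ) ≤ (R:ℝ))]
          linarith
        obtain ⟨z, hz⟩ := hconst i
        have hdec : (p i).eval ((N:ℕ) : ℝ)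
            = ((p i).eval ((N:ℕ):ℝ) - (G i b - G i a) - c i) + (G i b - G i a) + c i := by
          ring
        rw [hdec]
        have hcz : distToNearestInt (c i) = 0 := by rw [hc]; simp only; rw [hz]; exact dtni_int z
        calc distToNearestInt _
            ≤ distToNearestInt (((p i).eval ((N:ℕ):ℝ) - (G i b - G i a) - c i) + (G i b - G i a))
              + distToNearestInt (c i) := dtni_add _ _
          _ ≤ distToNearestInt ((p i).eval ((N:ℕ):ℝ) - (G i b - G i a) - c i)
              + distToNearestInt (G i b - G i a) + distToNearestInt (c i) := by
                linarith [dtni_add ((p i).eval ((N:ℕ):ℝ) - (G i b - G i a) - c i) (G i b - G i a)]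
          _ < ε / 2 + ε / 2 + 0 := by
                rw [hcz]
                have : distToNearestInt ((p i).eval ((N:ℕ):ℝ) - (G i b - G i a) - c i) < ε/2 :=
                  lt_of_le_of_lt hEst hEst2
                linarith
          _ = ε := by ring

end SIPAux

/-- **Small integer parts lemma.**  Fix `0 < ε < 1` and finitely many real polynomials
`p₁, …, p_k` whose constant terms are natural numbers.  Then there exist infinitely many
`N ∈ ℕ` such that `‖pᵢ(N)‖ < ε` for every `i`. -/
theorem small_int_parts (ε : ℝ) (hε₀ : 0 < ε) (hε₁ : ε < 1)
    (k : ℕ) (p : Fin k → Polynomial ℝ)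
    (hconst : ∀ i, ∃ n : ℕ, (p i).coeff 0 = (n : ℝ)) :
    ∀ M : ℕ, ∃ N : ℕ, M ≤ N ∧
      ∀ i, distToNearestInt ((p i).eval (N : ℝ)) < ε := by
  intro M
  classical
  set d : ℕ := Finset.univ.sup (fun i => (p i).natDegree) with hd
  have hdeg : ∀ i j, d < j → (p i).coeff j = 0 := by
    intro i j hj
    apply Polynomial.coeff_eq_zero_of_natDegree_lt
    have : (p i).natDegree ≤ d := by
      rw [hd]
      exact Finset.le_sup (f := fun i => (p i).natDegree) (Finset.mem_univ i)
    omega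
  have hconst' : ∀ i, ∃ z : ℤ, (p i).coeff 0 = (z : ℝ) := by
    intro i
    obtain ⟨n, hn⟩ := hconst i
    exact ⟨n, by exact_mod_cast hn⟩
  obtain ⟨N, hN, hprop⟩ := SIPAux.main d (Fin k) p hdeg hconst' ε hε₀ M
  exact ⟨N, hN, hprop⟩
end

section
/- Let ν be a function from subsets of ℝ to polynomials with real coefficients satisfying: (additivity) ν(A ∪ B) = ν(A) + ν(B) whenever A and B are disjoint; (translation invariance) ν({t + a : a ∈ A}) = ν(A) for every t ∈ ℝ and every A ⊆ ℝ; and (homogeneity) for every β ∈ ℝ and every A ⊆ ℝ, the polynomial ν({β·a : a ∈ A}) equals the polynomial x ↦ (ν(A))(β·x), i.e., ν(β·A) = ν(A) ∘ (β·X). Then there exists a real number α such that ν([0,1)) = α·X; that is, the coefficient of X^i in ν([0,1)) is zero for every i ≠ 1. -/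
/-!
Write `p = ν [0,1)`. Homogeneity gives `ν [0,2) = p(2X)`, while additivity and translation
invariance split `[0,2)` into two translates of `[0,1)`, so `p(2X) = 2p`. Comparing coefficients,
`2ⁿ cₙ = 2 cₙ`, which forces `cₙ = 0` for every `n ≠ 1`.
-/

open Polynomial Set

namespace Polynomial

variable {R : Type*} [CommRing R] [LinearOrder R] [IsStrictOrderedRing R]

theorem eq_C_mul_X_of_comp_C_mul_X_eq {p : R[X]} {b : R} (hb : 1 < b)
    (h : p.comp (C b * X) = C b * p) : p = C (p.coeff 1) * X := by
  ext n
  rcases eq_or_ne n 1 with rfl | hn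
  · simp
  rw [coeff_C_mul_X, if_neg hn]
  by_contra hc
  have hcoeff := congrArg (coeff · n) h
  simp only [comp_C_mul_X_coeff, coeff_C_mul] at hcoeff
  have hpow : b ^ n = b ^ 1 := by
    rw [pow_one]
    exact mul_left_cancel₀ hc (hcoeff.trans (mul_comm _ _))
  exact hn (pow_right_injective₀ (zero_lt_one.trans hb) hb.ne' hpow)

end Polynomial

section IntervalValues

variable {M : Type*} [AddCommMonoid M] {ν : Set ℝ → M}

theorem apply_Ico_zero_add (hadd : ∀ A B : Set ℝ, Disjoint A B → ν (A ∪ B) = ν A + ν B)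
    (htrans : ∀ (t : ℝ) (A : Set ℝ), ν ((fun a => t + a) '' A) = ν A)
    {s t : ℝ} (hs : 0 ≤ s) (ht : 0 ≤ t) :
    ν (Ico 0 (s + t)) = ν (Ico 0 s) + ν (Ico 0 t) := by
  have hshift : ν (Ico s (s + t)) = ν (Ico 0 t) := by
    rw [← htrans s (Ico 0 t), image_const_add_Ico, add_zero]
  rw [← Ico_union_Ico_eq_Ico hs (le_add_of_nonneg_right ht), hadd _ _ Ico_disjoint_Ico_same,
    hshift]

end IntervalValues

theorem apply_Ico_zero_mul {ν : Set ℝ → ℝ[X]}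
    (hhomog : ∀ (β : ℝ) (A : Set ℝ), ν ((fun a => β * a) '' A) = (ν A).comp (C β * X))
    {β : ℝ} (hβ : 0 < β) (s : ℝ) :
    ν (Ico 0 (β * s)) = (ν (Ico 0 s)).comp (C β * X) := by
  rw [← hhomog, image_mul_left_Ico hβ, mul_zero]

/-- **Scale-factor lemma.**  If `ν` assigns real polynomials to subsets of `ℝ`,
is finitely additive on disjoint sets, translation invariant, and homogeneous
(`ν (β·A) = ν(A) ∘ (β·X)`), then `ν [0,1) = α·X` for some real `α`. -/
theorem scale_factor (ν : Set ℝ → Polynomial ℝ)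
    (hadd : ∀ A B : Set ℝ, Disjoint A B → ν (A ∪ B) = ν A + ν B)
    (htrans : ∀ (t : ℝ) (A : Set ℝ), ν ((fun a => t + a) '' A) = ν A)
    (hhomog : ∀ (β : ℝ) (A : Set ℝ),
      ν ((fun a => β * a) '' A) = (ν A).comp (C β * X)) :
    ∃ α : ℝ, ν (Set.Ico (0 : ℝ) 1) = C α * X := by
  refine ⟨_, eq_C_mul_X_of_comp_C_mul_X_eq one_lt_two ?_⟩
  calc (ν (Ico 0 1)).comp (C 2 * X) = ν (Ico 0 (2 * 1)) :=
        (apply_Ico_zero_mul hhomog two_pos 1).symm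
    _ = ν (Ico 0 (1 + 1)) := by rw [mul_one, one_add_one_eq_two]
    _ = ν (Ico 0 1) + ν (Ico 0 1) := apply_Ico_zero_add hadd htrans zero_le_one zero_le_one
    _ = C 2 * ν (Ico 0 1) := by rw [← two_mul, C_ofNat]
end
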